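/- arXiv:0810.1173 — 7 statements merged into one kernel-verified Lean document; each statement's English description precedes it below -/
import Mathlib

section
/- For any 0 < δ < 1, any k ≥ 1, r > 0, any S ∈ W^k_r and any function Ŝ_n defined at the design points x_j = j/n, one has ‖Ŝ_n − S‖_n² ≥ (1 − δ) ‖T_n(Ŝ_n) − S‖² − (δ^{−1} − 1) r/n², where T_n(Ŝ_n) is the step-function extension of Ŝ_n. -/
open Finset MeasureTheory

/-- Sobolev ball `W^k_r`. -/
noncomputable def WBall (k : ℕ) (r : ℝ) : Set (ℝ → ℝ) :=
  {f | (∀ x, f (x + 1) = f x) ∧ ContDiff ℝ k f ∧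
    ∑ j ∈ Finset.range (k + 1), ∫ t in (0:ℝ)..1, (iteratedDeriv j f t) ^ 2 ≤ r}

/-- Empirical squared norm `‖f‖_n² = (1/n) ∑_{l=1}^n f(l/n)²`. -/
noncomputable def empNormSq (n : ℕ) (f : ℝ → ℝ) : ℝ :=
  (1 / (n : ℝ)) * ∑ l ∈ Finset.Icc 1 n, f ((l : ℝ) / n) ^ 2

/-- Step-function extension of a function known at the design points `k/n`:
`T_n(f)(x) = f(x_1)` on `[0, x_1]` and `T_n(f)(x) = f(x_k)` on `(x_{k−1}, x_k]`. -/
noncomputable def stepExt (n : ℕ) (f : ℝ → ℝ) (x : ℝ) : ℝ :=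
  if x ≤ 0 then f (1 / (n : ℝ)) else f ((⌈(n : ℝ) * x⌉ : ℤ) / (n : ℝ))

/-!
On each cell `(x_{i-1}, x_i]` the step function is the constant `c = Ŝ(x_i)`, and
`c - S t = (c - S x_i) + (S x_i - S t)`. The elementary inequality
`(1 - δ)(u + v)² ≤ u² + (δ⁻¹ - 1) v²` separates the design-point error from the oscillation
of `S` on the cell, which by the fundamental theorem of calculus and Cauchy–Schwarz is at most
`n⁻²` times the energy `∫ (S')²` on the cell. Summing over the cells and bounding
`∫₀¹ (S')²` by `r` gives the claim.
-/

lemma one_sub_mul_sq_add_le {δ : ℝ} (hδ : 0 < δ) (u v : ℝ) :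
    (1 - δ) * (u + v) ^ 2 ≤ u ^ 2 + (δ⁻¹ - 1) * v ^ 2 := by
  -- the difference is `(δ u - (1 - δ) v)² / δ`
  have hδδ : δ * δ⁻¹ = 1 := mul_inv_cancel₀ hδ.ne'
  nlinarith [sq_nonneg (δ * u - (1 - δ) * v), sq_nonneg v, mul_pos hδ hδ, sq_nonneg u]

namespace intervalIntegral

lemma sq_integral_le {f : ℝ → ℝ} {a b : ℝ} (hab : a ≤ b) (hf : IntervalIntegrable f volume a b)
    (hf2 : IntervalIntegrable (fun x => f x ^ 2) volume a b) :
    (∫ x in a..b, f x) ^ 2 ≤ (b - a) * ∫ x in a..b, f x ^ 2 := by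
  rcases hab.eq_or_lt with rfl | hlt
  · simp
  set I := ∫ x in a..b, f x
  set m := b - a
  have hm : 0 < m := sub_pos.mpr hlt
  have hexpand : ∫ x in a..b, (m * f x - I) ^ 2
      = m ^ 2 * (∫ x in a..b, f x ^ 2) - 2 * m * I * I + I ^ 2 * m := by
    have hpoly : ∀ x, (m * f x - I) ^ 2 = m ^ 2 * f x ^ 2 - (2 * m * I) * f x + I ^ 2 :=
      fun x => by ring
    simp_rw [hpoly]
    rw [integral_add ((hf2.const_mul _).sub (hf.const_mul _)) intervalIntegrable_const,
      integral_sub (hf2.const_mul _) (hf.const_mul _), integral_const_mul, integral_const_mul,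
      integral_const, smul_eq_mul]
    ring
  have hnonneg : 0 ≤ ∫ x in a..b, (m * f x - I) ^ 2 :=
    integral_nonneg hab fun x _ => sq_nonneg _
  rw [hexpand] at hnonneg
  nlinarith [sq_nonneg I, hm]

end intervalIntegral

section OneDerivative

variable {S : ℝ → ℝ} (hS : ContDiff ℝ 1 S)
include hS

lemma sq_sub_le_mul_integral_deriv_sq {a b t : ℝ} (ht : t ∈ Set.Icc a b) :
    (S b - S t) ^ 2 ≤ (b - a) * ∫ x in a..b, deriv S x ^ 2 := by
  have hc : Continuous (deriv S) := hS.continuous_deriv_one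
  have hftc : ∫ x in t..b, deriv S x = S b - S t :=
    intervalIntegral.integral_deriv_eq_sub (fun x _ => hS.differentiable one_ne_zero x)
      (hc.intervalIntegrable t b)
  have hcs := intervalIntegral.sq_integral_le ht.2 (hc.intervalIntegrable t b)
    ((hc.pow 2).intervalIntegrable t b)
  rw [hftc] at hcs
  have hsub : ∫ x in t..b, deriv S x ^ 2 ≤ ∫ x in a..b, deriv S x ^ 2 :=
    intervalIntegral.integral_mono_interval ht.1 ht.2 le_rfl
      (ae_of_all _ fun x => sq_nonneg _) ((hc.pow 2).intervalIntegrable a b)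
  have hpos : 0 ≤ ∫ x in t..b, deriv S x ^ 2 :=
    intervalIntegral.integral_nonneg ht.2 fun x _ => sq_nonneg _
  calc (S b - S t) ^ 2 ≤ (b - t) * ∫ x in t..b, deriv S x ^ 2 := hcs
    _ ≤ (b - a) * ∫ x in a..b, deriv S x ^ 2 :=
      mul_le_mul (by linarith [ht.1]) hsub hpos (by linarith [ht.1, ht.2])

lemma integral_sq_sub_le {a b : ℝ} (hab : a ≤ b) :
    ∫ t in a..b, (S b - S t) ^ 2 ≤ (b - a) ^ 2 * ∫ x in a..b, deriv S x ^ 2 := by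
  calc ∫ t in a..b, (S b - S t) ^ 2
      ≤ ∫ _ in a..b, (b - a) * ∫ x in a..b, deriv S x ^ 2 :=
        intervalIntegral.integral_mono_on hab
          (((continuous_const.sub hS.continuous).pow 2).intervalIntegrable a b)
          intervalIntegrable_const fun t ht => sq_sub_le_mul_integral_deriv_sq hS ht
    _ = (b - a) ^ 2 * ∫ x in a..b, deriv S x ^ 2 := by
      rw [intervalIntegral.integral_const, smul_eq_mul]; ring

lemma one_sub_mul_integral_sq_sub_le {δ : ℝ} (hδ0 : 0 < δ) (hδ1 : δ ≤ 1) {a b : ℝ} (hab : a ≤ b)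
    (c : ℝ) :
    (1 - δ) * ∫ t in a..b, (c - S t) ^ 2
      ≤ (b - a) * (c - S b) ^ 2 + (δ⁻¹ - 1) * (b - a) ^ 2 * ∫ x in a..b, deriv S x ^ 2 := by
  have hSc : Continuous S := hS.continuous
  have hosc : Continuous fun t => (δ⁻¹ - 1) * (S b - S t) ^ 2 :=
    continuous_const.mul ((continuous_const.sub hSc).pow 2)
  have hδinv : 0 ≤ δ⁻¹ - 1 := sub_nonneg.mpr ((one_le_inv₀ hδ0).mpr hδ1)
  calc (1 - δ) * ∫ t in a..b, (c - S t) ^ 2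
      = ∫ t in a..b, (1 - δ) * ((c - S b) + (S b - S t)) ^ 2 := by
        simp only [sub_add_sub_cancel, intervalIntegral.integral_const_mul]
    _ ≤ ∫ t in a..b, ((c - S b) ^ 2 + (δ⁻¹ - 1) * (S b - S t) ^ 2) :=
        intervalIntegral.integral_mono_on hab
          (Continuous.intervalIntegrable (by fun_prop) a b)
          ((continuous_const.add hosc).intervalIntegrable a b)
          fun t _ => one_sub_mul_sq_add_le hδ0 (c - S b) (S b - S t)
    _ = (b - a) * (c - S b) ^ 2 + (δ⁻¹ - 1) * ∫ t in a..b, (S b - S t) ^ 2 := by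
        rw [intervalIntegral.integral_add intervalIntegrable_const (hosc.intervalIntegrable a b),
          intervalIntegral.integral_const_mul, intervalIntegral.integral_const, smul_eq_mul]
    _ ≤ (b - a) * (c - S b) ^ 2 + (δ⁻¹ - 1) * (b - a) ^ 2 * ∫ x in a..b, deriv S x ^ 2 := by
        rw [mul_assoc]
        gcongr
        exact integral_sq_sub_le hS hab

end OneDerivative

section DesignGrid

variable {n : ℕ}

lemma stepExt_of_mem_Ioc (hn : 0 < n) (f : ℝ → ℝ) {i : ℕ} {t : ℝ}
    (ht : t ∈ Set.Ioc ((i : ℝ) / n) ((i + 1) / n)) : stepExt n f t = f ((i + 1) / n) := by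
  have hn0 : (0 : ℝ) < n := Nat.cast_pos.mpr hn
  have htpos : 0 < t := lt_of_le_of_lt (by positivity) ht.1
  have hceil : ⌈(n : ℝ) * t⌉ = i + 1 := by
    have hlo := (div_lt_iff₀ hn0).mp ht.1
    have hhi := (le_div_iff₀ hn0).mp ht.2
    rw [Int.ceil_eq_iff]
    push_cast
    constructor <;> linarith
  rw [stepExt, if_neg htpos.not_ge, hceil]
  push_cast
  rfl

lemma sum_integral_cells (hn : 0 < n) {f : ℝ → ℝ}
    (hf : ∀ i < n, IntervalIntegrable f volume ((i : ℝ) / n) ((i + 1) / n)) :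
    ∑ i ∈ range n, ∫ t in (i / n : ℝ)..((i + 1) / n), f t = ∫ t in (0 : ℝ)..1, f t := by
  have hn0 : (n : ℝ) ≠ 0 := by positivity
  have h := intervalIntegral.sum_integral_adjacent_intervals
    (a := fun i : ℕ => (i : ℝ) / n) (μ := volume) fun i hi => by push_cast; exact hf i hi
  simpa only [Nat.cast_zero, zero_div, div_self hn0, Nat.cast_add, Nat.cast_one] using h

lemma integral_stepExt_sub_sq (hn : 0 < n) (f : ℝ → ℝ) {g : ℝ → ℝ} (hg : Continuous g) :
    ∫ t in (0 : ℝ)..1, (stepExt n f t - g t) ^ 2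
      = ∑ i ∈ range n, ∫ t in (i / n : ℝ)..((i + 1) / n), (f ((i + 1) / n) - g t) ^ 2 := by
  have hcell : ∀ i : ℕ, Set.EqOn (fun t => (f ((i + 1) / n) - g t) ^ 2)
      (fun t => (stepExt n f t - g t) ^ 2) (Set.uIoc ((i : ℝ) / n) ((i + 1) / n)) := by
    intro i t ht
    rw [Set.uIoc_of_le (by gcongr; linarith)] at ht
    simp only [stepExt_of_mem_Ioc hn f ht]
  rw [← sum_integral_cells hn fun i _ =>
    (Continuous.intervalIntegrable (by fun_prop) _ _).congr (hcell i)]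
  exact sum_congr rfl fun i _ =>
    (intervalIntegral.integral_congr_ae (ae_of_all _ fun t ht => (hcell i ht).symm))

lemma empNormSq_eq_sum_range (n : ℕ) (f : ℝ → ℝ) :
    empNormSq n f = 1 / n * ∑ i ∈ range n, f ((i + 1) / n) ^ 2 := by
  rw [empNormSq, ← Finset.Ico_add_one_right_eq_Icc, Finset.sum_Ico_eq_sum_range]
  push_cast
  simp only [add_comm]

theorem one_sub_mul_integral_stepExt_sub_sq_le {S : ℝ → ℝ} (hS : ContDiff ℝ 1 S) {δ : ℝ}
    (hδ0 : 0 < δ) (hδ1 : δ ≤ 1) (hn : 0 < n) (f : ℝ → ℝ) :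
    (1 - δ) * ∫ t in (0 : ℝ)..1, (stepExt n f t - S t) ^ 2
      ≤ empNormSq n (fun x => f x - S x) + (δ⁻¹ - 1) / n ^ 2 * ∫ t in (0 : ℝ)..1, deriv S t ^ 2 := by
  have hn0 : (0 : ℝ) < n := Nat.cast_pos.mpr hn
  have hwidth : ∀ i : ℕ, ((i : ℝ) + 1) / n - i / n = 1 / n := fun i => by field_simp; ring
  rw [integral_stepExt_sub_sq hn f hS.continuous, empNormSq_eq_sum_range,
    ← sum_integral_cells (f := fun t => deriv S t ^ 2) hn fun i _ =>
      (hS.continuous_deriv_one.pow 2).intervalIntegrable _ _,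
    mul_sum, mul_sum, mul_sum, ← sum_add_distrib]
  refine sum_le_sum fun i _ => ?_
  have hcell := one_sub_mul_integral_sq_sub_le hS hδ0 hδ1
    (a := i / n) (b := (i + 1) / n) (by gcongr; linarith) (f ((i + 1) / n))
  rw [hwidth] at hcell
  calc _ ≤ _ := hcell
    _ = _ := by ring

end DesignGrid

section WBall

variable {k : ℕ} {r : ℝ} {S : ℝ → ℝ}

lemma contDiff_one_of_mem_WBall (hk : 1 ≤ k) (hS : S ∈ WBall k r) : ContDiff ℝ 1 S :=
  hS.2.1.of_le (by exact_mod_cast hk)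

lemma integral_deriv_sq_le_of_mem_WBall (hk : 1 ≤ k) (hS : S ∈ WBall k r) :
    ∫ t in (0 : ℝ)..1, deriv S t ^ 2 ≤ r := by
  have hterm := single_le_sum (f := fun j => ∫ t in (0 : ℝ)..1, iteratedDeriv j S t ^ 2)
    (fun j _ => intervalIntegral.integral_nonneg zero_le_one fun t _ => sq_nonneg _)
    (mem_range.mpr (Nat.lt_succ_of_le hk))
  simp only [iteratedDeriv_one] at hterm
  exact hterm.trans hS.2.2

end WBall

theorem stmt5_general (δ : ℝ) (hδ0 : 0 < δ) (hδ1 : δ < 1) (k : ℕ) (hk : 1 ≤ k)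
    (r : ℝ) (S : ℝ → ℝ) (hS : S ∈ WBall k r)
    (n : ℕ) (hn : 1 ≤ n) (Shat : ℝ → ℝ) :
    empNormSq n (fun x => Shat x - S x)
      ≥ (1 - δ) * (∫ t in (0:ℝ)..1, (stepExt n Shat t - S t) ^ 2)
        - (δ⁻¹ - 1) * r / (n : ℝ) ^ 2 := by
  have hsplit := one_sub_mul_integral_stepExt_sub_sq_le (contDiff_one_of_mem_WBall hk hS)
    hδ0 hδ1.le hn Shat
  have hcoef : 0 ≤ (δ⁻¹ - 1) / (n : ℝ) ^ 2 :=
    div_nonneg (sub_nonneg.mpr ((one_le_inv₀ hδ0).mpr hδ1.le)) (sq_nonneg _)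
  have henergy := mul_le_mul_of_nonneg_left (integral_deriv_sq_le_of_mem_WBall hk hS) hcoef
  rw [div_mul_eq_mul_div _ _ r] at henergy
  linarith

/-- For any `0 < δ < 1`, `S ∈ W^k_r` and any function `Ŝ` defined at the design points,
`‖Ŝ − S‖_n² ≥ (1−δ)‖T_n(Ŝ) − S‖² − (δ⁻¹ − 1) r/n²`. -/
theorem stmt5 (δ : ℝ) (hδ0 : 0 < δ) (hδ1 : δ < 1) (k : ℕ) (hk : 1 ≤ k)
    (r : ℝ) (hr : 0 < r) (S : ℝ → ℝ) (hS : S ∈ WBall k r)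
    (n : ℕ) (hn : 1 ≤ n) (Shat : ℝ → ℝ) :
    empNormSq n (fun x => Shat x - S x)
      ≥ (1 - δ) * (∫ t in (0:ℝ)..1, (stepExt n Shat t - S t) ^ 2)
        - (δ⁻¹ - 1) * r / (n : ℝ) ^ 2 :=
  stmt5_general δ hδ0 hδ1 k hk r S hS n hn Shat
end

section
/- For any nonnegative integer m, any integer N ≥ 2 and any x ∈ [0,1], one has | Σ_{l=2}^N l^m (φ_l²(x) − 1) | ≤ 2^m N^m, where (φ_l) is the trigonometric basis on [0,1]. -/
open Finset

/-- Trigonometric basis on `[0,1]`. -/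
noncomputable def phiB (j : ℕ) (x : ℝ) : ℝ :=
  if j = 1 then 1
  else if j % 2 = 0 then Real.sqrt 2 * Real.cos (2 * Real.pi * (j / 2 : ℕ) * x)
  else Real.sqrt 2 * Real.sin (2 * Real.pi * (j / 2 : ℕ) * x)

/-!
For `k ≥ 1` the functions `φ_{2k}` and `φ_{2k+1}` share the frequency `k`, and
`φ_{2k}² - 1 = cos (4πkx) = -(φ_{2k+1}² - 1)`. Grouped into these pairs, the sum becomes
`∑ₖ ((2k)^m - (2k+1)^m) cos (4πkx)`, whose absolute value telescopes to at most
`(N+1)^m - 2^m ≤ 2^m N^m` for odd `N`; for even `N` one unpaired term of size at most `N^m` remains.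
-/

theorem sum_Icc_two_eq_sum_range_pairs {M : Type*} [AddCommMonoid M] (h : ℕ → M) (K : ℕ) :
    ∑ l ∈ Icc 2 (2 * K + 1), h l = ∑ k ∈ range K, (h (2 * k + 2) + h (2 * k + 3)) := by
  induction K with
  | zero => simp
  | succ K ih =>
    rw [sum_range_succ, ← ih, ← add_assoc, ← sum_Icc_succ_top (by omega),
      ← sum_Icc_succ_top (by omega)]
    rfl

theorem abs_sum_range_pair_diff_mul_le {a g : ℕ → ℝ} (ha : Monotone a) (hg : ∀ k, |g k| ≤ 1)
    (K : ℕ) : |∑ k ∈ range K, (a (2 * k + 1) - a (2 * k)) * g k| ≤ a (2 * K) - a 0 := calc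
  _ ≤ ∑ k ∈ range K, |(a (2 * k + 1) - a (2 * k)) * g k| := abs_sum_le_sum_abs _ _
  _ ≤ ∑ k ∈ range K, (a (2 * (k + 1)) - a (2 * k)) := by
    gcongr with k
    have hk₁ : a (2 * k) ≤ a (2 * k + 1) := ha (by omega)
    have hk₂ : a (2 * k + 1) ≤ a (2 * (k + 1)) := ha (by omega)
    rw [abs_mul, abs_of_nonneg (sub_nonneg.mpr hk₁)]
    nlinarith [hg k]
  _ = a (2 * K) - a 0 := sum_range_sub (fun k ↦ a (2 * k)) K

theorem phiB_two_mul_sq_sub_one (k : ℕ) (x : ℝ) :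
    phiB (2 * k) x ^ 2 - 1 = Real.cos (2 * (2 * Real.pi * k * x)) := by
  rw [phiB, if_neg (by omega), if_pos (by omega), Nat.mul_div_cancel_left k two_pos, mul_pow,
    Real.sq_sqrt zero_le_two, Real.cos_two_mul]

theorem phiB_two_mul_add_one_sq_sub_one {k : ℕ} (hk : k ≠ 0) (x : ℝ) :
    phiB (2 * k + 1) x ^ 2 - 1 = -Real.cos (2 * (2 * Real.pi * k * x)) := by
  rw [phiB, if_neg (by omega), if_neg (by omega), show (2 * k + 1) / 2 = k by omega, mul_pow,
    Real.sq_sqrt zero_le_two, Real.cos_two_mul, Real.cos_sq']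
  ring

theorem two_mul_pow_sub_two_pow_le (m : ℕ) {y : ℝ} (hy : 0 ≤ y) :
    2 * y ^ m - 2 ^ m ≤ 2 ^ m * y ^ m := by
  rcases Nat.eq_zero_or_pos m with rfl | hm
  · norm_num
  · have : (2 : ℝ) ≤ 2 ^ m := le_self_pow₀ one_le_two hm.ne'
    nlinarith [pow_nonneg hy m]

theorem abs_sum_Icc_pow_mul_phiB_sq_sub_one_le (m K : ℕ) (x : ℝ) :
    |∑ l ∈ Icc 2 (2 * K + 1), (l : ℝ) ^ m * (phiB l x ^ 2 - 1)|
      ≤ ((2 * (K + 1) : ℕ) : ℝ) ^ m - 2 ^ m := by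
  set a : ℕ → ℝ := fun l ↦ ((l : ℝ) + 2) ^ m
  set g : ℕ → ℝ := fun k ↦ -Real.cos (2 * (2 * Real.pi * (k + 1 : ℕ) * x))
  have ha : Monotone a := fun i j hij ↦ by
    have : (i : ℝ) ≤ j := Nat.cast_le.mpr hij
    simp only [a]
    gcongr
  have hg (k : ℕ) : |g k| ≤ 1 := (abs_neg _).trans_le (Real.abs_cos_le_one _)
  have hpair (k : ℕ) : ((2 * k + 2 : ℕ) : ℝ) ^ m * (phiB (2 * k + 2) x ^ 2 - 1)
      + ((2 * k + 3 : ℕ) : ℝ) ^ m * (phiB (2 * k + 3) x ^ 2 - 1)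
      = (a (2 * k + 1) - a (2 * k)) * g k := by
    rw [show 2 * k + 2 = 2 * (k + 1) by ring, phiB_two_mul_sq_sub_one,
      show 2 * k + 3 = 2 * (k + 1) + 1 by ring, phiB_two_mul_add_one_sq_sub_one k.succ_ne_zero]
    simp only [a, g]
    push_cast
    ring
  rw [sum_Icc_two_eq_sum_range_pairs, sum_congr rfl fun k _ ↦ hpair k]
  convert abs_sum_range_pair_diff_mul_le ha hg K using 1
  simp only [a]
  push_cast
  ring

theorem stmt11_general (m : ℕ) (N : ℕ) (x : ℝ) :
    |∑ l ∈ Finset.Icc 2 N, (l : ℝ) ^ m * ((phiB l x) ^ 2 - 1)| ≤ 2 ^ m * (N : ℝ) ^ m := by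
  obtain ⟨K, rfl | rfl⟩ := Nat.even_or_odd' N
  · cases K with
    | zero => simp
    | succ K =>
      rw [show 2 * (K + 1) = 2 * K + 1 + 1 by ring, sum_Icc_succ_top (by omega),
        show 2 * K + 1 + 1 = 2 * (K + 1) by ring, phiB_two_mul_sq_sub_one]
      calc _ ≤ _ := abs_add_le _ _
        _ ≤ (((2 * (K + 1) : ℕ) : ℝ) ^ m - 2 ^ m) + ((2 * (K + 1) : ℕ) : ℝ) ^ m := by
          gcongr
          · exact abs_sum_Icc_pow_mul_phiB_sq_sub_one_le m K x
          · rw [abs_mul, abs_pow, Nat.abs_cast]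
            exact mul_le_of_le_one_right (by positivity) (Real.abs_cos_le_one _)
        _ ≤ _ := by linarith [two_mul_pow_sub_two_pow_le m (Nat.cast_nonneg (2 * (K + 1)))]
  · calc _ ≤ ((2 * (K + 1) : ℕ) : ℝ) ^ m - 2 ^ m := abs_sum_Icc_pow_mul_phiB_sq_sub_one_le m K x
      _ ≤ ((2 * (2 * K + 1) : ℕ) : ℝ) ^ m := by
        refine (sub_le_self _ (by positivity)).trans (pow_le_pow_left₀ (Nat.cast_nonneg _) ?_ m)
        exact_mod_cast (by omega)
      _ = 2 ^ m * ((2 * K + 1 : ℕ) : ℝ) ^ m := by push_cast; rw [mul_pow]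

/-- For any `m ≥ 0`, `N ≥ 2` and `x ∈ [0,1]`,
`|∑_{l=2}^N l^m (φ_l²(x) − 1)| ≤ 2^m N^m`. -/
theorem stmt11 (m : ℕ) (N : ℕ) (hN : 2 ≤ N) (x : ℝ) (hx : x ∈ Set.Icc (0:ℝ) 1) :
    |∑ l ∈ Finset.Icc 2 N, (l : ℝ) ^ m * ((phiB l x) ^ 2 - 1)| ≤ 2 ^ m * (N : ℝ) ^ m :=
  stmt11_general m N x
end

section
/- For any S ∈ W^1_r, any n ≥ 2 and any 1 ≤ j ≤ n, the difference between the discrete and continuous Fourier coefficients satisfies |θ_{j,n} − θ_j| ≤ 2π √r · j/n, where θ_{j,n} = (S, φ_j)_n and θ_j = ∫₀¹ S(t) φ_j(t) dt. -/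
open Finset MeasureTheory

/-- Discrete Fourier coefficient `θ_{j,n} = (S,φ_j)_n`. -/
noncomputable def thetaDisc (n : ℕ) (S : ℝ → ℝ) (j : ℕ) : ℝ :=
  (1 / (n : ℝ)) * ∑ l ∈ Finset.Icc 1 n, S ((l : ℝ) / n) * phiB j ((l : ℝ) / n)

/-- Continuous Fourier coefficient `θ_j = ∫₀¹ S φ_j`. -/
noncomputable def thetaCont (S : ℝ → ℝ) (j : ℕ) : ℝ :=
  ∫ t in (0:ℝ)..1, S t * phiB j t

/-! With `g = S φ_j`, the right-endpoint value of `g` on each cell `[(l-1)/n, l/n]` differs from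
its mean over the cell by at most `∫_cell |g'|`, so `|θ_{j,n} - θ_j| ≤ (1/n) ∫₀¹ |g'|`. Since
`|φ_j| ≤ √2` and `|φ_j'| ≤ √2 π j`, Cauchy–Schwarz on `[0,1]` bounds `∫₀¹ |g'|` by
`√2 π j (‖S'‖₂ + ‖S‖₂) ≤ 2 π j √(‖S‖₂² + ‖S'‖₂²) ≤ 2 π j √r`. -/

open Real

lemma contDiff_phiB {k : WithTop ℕ∞} (j : ℕ) : ContDiff ℝ k (phiB j) := by
  unfold phiB; split_ifs <;> fun_prop

lemma abs_phiB_le (j : ℕ) (x : ℝ) : |phiB j x| ≤ √2 := by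
  have h1 : (1 : ℝ) ≤ √2 := one_le_sqrt.2 (by norm_num)
  unfold phiB
  split_ifs
  · simp [h1]
  · rw [abs_mul, abs_of_nonneg (sqrt_nonneg 2)]
    exact mul_le_of_le_one_right (sqrt_nonneg 2) (abs_cos_le_one _)
  · rw [abs_mul, abs_of_nonneg (sqrt_nonneg 2)]
    exact mul_le_of_le_one_right (sqrt_nonneg 2) (abs_sin_le_one _)

lemma abs_deriv_phiB_le (j : ℕ) (x : ℝ) : |deriv (phiB j) x| ≤ √2 * π * j := by
  set ω : ℝ := 2 * π * (j / 2 : ℕ)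
  have hω : √2 * |ω| ≤ √2 * π * j := by
    have : ((j / 2 : ℕ) : ℝ) * 2 ≤ j := by exact_mod_cast Nat.div_mul_le_self j 2
    rw [mul_assoc, abs_of_nonneg (by positivity)]
    gcongr
    nlinarith [pi_pos]
  have hωx := (hasDerivAt_id' x).const_mul ω
  by_cases h1 : j = 1
  · have : phiB j = fun _ => 1 := funext fun x => by simp [phiB, h1]
    simp [this]; positivity
  by_cases h2 : j % 2 = 0
  · have : phiB j = fun x => √2 * cos (ω * x) := funext fun x => by simp [phiB, h1, h2, ω]
    rw [this, (hωx.cos.const_mul √2).deriv]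
    calc _ = √2 * |sin (ω * x)| * |ω| := by simp [abs_mul, mul_assoc]
      _ ≤ √2 * 1 * |ω| := by gcongr; exact abs_sin_le_one _
      _ ≤ _ := by simpa using hω
  · have : phiB j = fun x => √2 * sin (ω * x) := funext fun x => by simp [phiB, h1, h2, ω]
    rw [this, (hωx.sin.const_mul √2).deriv]
    calc _ = √2 * |cos (ω * x)| * |ω| := by simp [abs_mul, mul_assoc]
      _ ≤ √2 * 1 * |ω| := by gcongr; exact abs_cos_le_one _
      _ ≤ _ := by simpa using hω

lemma integral_abs_le_sqrt_integral_sq {f : ℝ → ℝ} (hf : Continuous f) :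
    ∫ t in (0:ℝ)..1, |f t| ≤ √(∫ t in (0:ℝ)..1, f t ^ 2) := by
  set m := ∫ t in (0:ℝ)..1, |f t|
  have hvar : 0 ≤ ∫ t in (0:ℝ)..1, (|f t| - m) ^ 2 :=
    intervalIntegral.integral_nonneg zero_le_one fun _ _ => sq_nonneg _
  have hexpand : ∫ t in (0:ℝ)..1, (|f t| - m) ^ 2 = (∫ t in (0:ℝ)..1, f t ^ 2) - m ^ 2 := by
    have hsq : ∀ t, (|f t| - m) ^ 2 = (f t ^ 2 - 2 * m * |f t|) + m ^ 2 := fun t => by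
      rw [sub_sq, sq_abs]; ring
    simp_rw [hsq]
    rw [intervalIntegral.integral_add (f := fun t => f t ^ 2 - 2 * m * |f t|)
        (Continuous.intervalIntegrable (by fun_prop) _ _) intervalIntegrable_const,
      intervalIntegral.integral_sub (Continuous.intervalIntegrable (by fun_prop) _ _)
        (Continuous.intervalIntegrable (by fun_prop) _ _),
      intervalIntegral.integral_const_mul]
    simp only [intervalIntegral.integral_const, sub_zero, one_smul]
    ring
  exact le_sqrt_of_sq_le (by linarith)

lemma abs_mul_sub_integral_le {g : ℝ → ℝ} (hg : ContDiff ℝ 1 g) {a b : ℝ} (hab : a ≤ b) :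
    |(b - a) * g b - ∫ t in a..b, g t| ≤ (b - a) * ∫ t in a..b, |deriv g t| := by
  have hg' : Continuous (deriv g) := hg.continuous_deriv le_rfl
  have hpt : ∀ t ∈ Set.uIoc a b, ‖g b - g t‖ ≤ ∫ t in a..b, |deriv g t| := by
    intro t ht
    rw [Set.uIoc_of_le hab] at ht
    rw [← intervalIntegral.integral_deriv_eq_sub (fun x _ => hg.differentiable one_ne_zero x)
      (hg'.intervalIntegrable _ _)]
    calc ‖∫ u in t..b, deriv g u‖ ≤ ∫ u in t..b, |deriv g u| :=
          intervalIntegral.abs_integral_le_integral_abs ht.2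
      _ ≤ ∫ u in a..b, |deriv g u| :=
          intervalIntegral.integral_mono_interval ht.1.le ht.2 le_rfl
            (Filter.Eventually.of_forall fun _ => abs_nonneg _) (hg'.abs.intervalIntegrable _ _)
  have := intervalIntegral.norm_integral_le_of_norm_le_const hpt
  rwa [intervalIntegral.integral_sub intervalIntegrable_const
      (hg.continuous.intervalIntegrable _ _), intervalIntegral.integral_const, smul_eq_mul,
    abs_of_nonneg (sub_nonneg.2 hab), mul_comm _ (b - a), norm_eq_abs] at this

lemma abs_riemannSum_sub_integral_le {g : ℝ → ℝ} (hg : ContDiff ℝ 1 g) {n : ℕ} (hn : 0 < n) :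
    |(1 / (n : ℝ)) * ∑ l ∈ Finset.Icc 1 n, g (l / n) - ∫ t in (0:ℝ)..1, g t|
      ≤ (∫ t in (0:ℝ)..1, |deriv g t|) / n := by
  set a : ℕ → ℝ := fun i => i / n
  have hn' : (0 : ℝ) < n := Nat.cast_pos.2 hn
  have hstep : ∀ i, a (i + 1) - a i = 1 / n := fun i => by
    simp only [a]; push_cast; field_simp; ring
  have hends : a 0 = 0 ∧ a n = 1 := ⟨by simp [a], div_self hn'.ne'⟩
  have hsum : ∑ l ∈ Finset.Icc 1 n, g (l / n) = ∑ i ∈ Finset.range n, g (a (i + 1)) := by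
    rw [← Finset.Ico_add_one_right_eq_Icc, Finset.sum_Ico_eq_sum_range, Nat.add_sub_cancel]
    simp only [a, add_comm 1]
  have hsplit : ∀ {f : ℝ → ℝ}, Continuous f →
      ∑ i ∈ Finset.range n, ∫ t in a i..a (i + 1), f t = ∫ t in (0:ℝ)..1, f t := fun hf => by
    rw [← hends.1, ← hends.2]
    exact intervalIntegral.sum_integral_adjacent_intervals fun _ _ => hf.intervalIntegrable _ _
  rw [hsum, Finset.mul_sum, ← hsplit hg.continuous, ← hsplit (hg.continuous_deriv le_rfl).abs,
    ← Finset.sum_sub_distrib, Finset.sum_div]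
  refine (Finset.abs_sum_le_sum_abs _ _).trans (Finset.sum_le_sum fun i _ => ?_)
  have hi : a i ≤ a (i + 1) := by simp only [a]; gcongr; simp
  have := abs_mul_sub_integral_le hg hi
  rwa [hstep i, one_div_mul_eq_div _ (∫ t in a i..a (i + 1), |deriv g t|)] at this

lemma abs_deriv_mul_phiB_le {S : ℝ → ℝ} (hS : Differentiable ℝ S) (j : ℕ) (t : ℝ) :
    |deriv (fun t => S t * phiB j t) t| ≤ √2 * |deriv S t| + √2 * π * j * |S t| := by
  rw [deriv_fun_mul (hS t) ((contDiff_phiB (k := 1) j).differentiable one_ne_zero t)]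
  calc _ ≤ |deriv S t| * |phiB j t| + |S t| * |deriv (phiB j) t| := by
        simpa only [abs_mul] using abs_add_le (deriv S t * phiB j t) (S t * deriv (phiB j) t)
    _ ≤ |deriv S t| * √2 + |S t| * (√2 * π * j) := by
        gcongr
        exacts [abs_phiB_le j t, abs_deriv_phiB_le j t]
    _ = _ := by ring

lemma integral_abs_deriv_mul_phiB_le {S : ℝ → ℝ} (hS : ContDiff ℝ 1 S) {j : ℕ} (hj : 1 ≤ j) :
    ∫ t in (0:ℝ)..1, |deriv (fun t => S t * phiB j t) t|
      ≤ 2 * π * j * √((∫ t in (0:ℝ)..1, S t ^ 2) + ∫ t in (0:ℝ)..1, deriv S t ^ 2) := by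
  have hS' : Continuous (deriv S) := hS.continuous_deriv le_rfl
  set I₀ := ∫ t in (0:ℝ)..1, S t ^ 2
  set I₁ := ∫ t in (0:ℝ)..1, deriv S t ^ 2
  have hI₀ : 0 ≤ I₀ := intervalIntegral.integral_nonneg zero_le_one fun _ _ => sq_nonneg _
  have hI₁ : 0 ≤ I₁ := intervalIntegral.integral_nonneg zero_le_one fun _ _ => sq_nonneg _
  have hS₀ : ∫ t in (0:ℝ)..1, |S t| ≤ √I₀ := integral_abs_le_sqrt_integral_sq hS.continuous
  have hS₁ : ∫ t in (0:ℝ)..1, |deriv S t| ≤ √I₁ := integral_abs_le_sqrt_integral_sq hS'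
  have hπj : 1 ≤ π * j :=
    one_le_mul_of_one_le_of_one_le (by linarith [pi_gt_three]) (by exact_mod_cast hj)
  have hsqrt : √I₁ + √I₀ ≤ √2 * √(I₀ + I₁) := by
    rw [← sqrt_mul zero_le_two]
    refine le_sqrt_of_sq_le (add_sq_le.trans_eq ?_)
    rw [sq_sqrt hI₀, sq_sqrt hI₁, add_comm I₁]
  calc ∫ t in (0:ℝ)..1, |deriv (fun t => S t * phiB j t) t|
      ≤ ∫ t in (0:ℝ)..1, (√2 * |deriv S t| + √2 * π * j * |S t|) :=
        intervalIntegral.integral_mono_on zero_le_one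
          (((hS.mul (contDiff_phiB j)).continuous_deriv le_rfl).abs.intervalIntegrable _ _)
          (Continuous.intervalIntegrable (by fun_prop) _ _)
          fun t _ => abs_deriv_mul_phiB_le (hS.differentiable one_ne_zero) j t
    _ = √2 * (∫ t in (0:ℝ)..1, |deriv S t|) + √2 * π * j * ∫ t in (0:ℝ)..1, |S t| := by
        rw [intervalIntegral.integral_add (Continuous.intervalIntegrable (by fun_prop) _ _)
            (Continuous.intervalIntegrable (by fun_prop) _ _),
          intervalIntegral.integral_const_mul, intervalIntegral.integral_const_mul]
    _ ≤ √2 * √I₁ + √2 * π * j * √I₀ := by gcongr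
    _ ≤ √2 * (π * j) * (√I₁ + √I₀) := by
        nlinarith [mul_le_mul_of_nonneg_left hπj (mul_nonneg (sqrt_nonneg 2) (sqrt_nonneg I₁))]
    _ ≤ √2 * (π * j) * (√2 * √(I₀ + I₁)) := by gcongr
    _ = 2 * π * j * √(I₀ + I₁) := by
        linear_combination (π * j * √(I₀ + I₁)) * mul_self_sqrt (zero_le_two : (0 : ℝ) ≤ 2)

theorem stmt12_general (r : ℝ) (S : ℝ → ℝ) (hS : S ∈ WBall 1 r)
    (n : ℕ) (j : ℕ) (hj1 : 1 ≤ j) (hjn : j ≤ n) :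
    |thetaDisc n S j - thetaCont S j| ≤ 2 * Real.pi * Real.sqrt r * j / n := by
  obtain ⟨-, hS, hW⟩ := hS
  have hnorm : (∫ t in (0:ℝ)..1, S t ^ 2) + ∫ t in (0:ℝ)..1, deriv S t ^ 2 ≤ r := by
    simpa [Finset.sum_range_succ] using hW
  calc |thetaDisc n S j - thetaCont S j|
      ≤ (∫ t in (0:ℝ)..1, |deriv (fun t => S t * phiB j t) t|) / n :=
        abs_riemannSum_sub_integral_le (hS.mul (contDiff_phiB j)) (by omega)
    _ ≤ 2 * π * j * √r / n := by
        gcongr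
        exact (integral_abs_deriv_mul_phiB_le hS hj1).trans (by gcongr)
    _ = 2 * π * √r * j / n := by ring

/-- For `S ∈ W¹_r`, `n ≥ 2` and `1 ≤ j ≤ n`, `|θ_{j,n} − θ_j| ≤ 2π√r · j/n`. -/
theorem stmt12 (r : ℝ) (hr : 0 < r) (S : ℝ → ℝ) (hS : S ∈ WBall 1 r)
    (n : ℕ) (hn : 2 ≤ n) (j : ℕ) (hj1 : 1 ≤ j) (hjn : j ≤ n) :
    |thetaDisc n S j - thetaCont S j| ≤ 2 * Real.pi * Real.sqrt r * j / n :=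
  stmt12_general r S hS n j hj1 hjn
end

section
/- If n is odd, then the first n trigonometric basis functions are orthonormal with respect to the empirical inner product: for any 1 ≤ i, j ≤ n, (1/n) Σ_{l=1}^n φ_i(l/n) φ_j(l/n) = 1 if i = j and = 0 if i ≠ j. -/
/-!
Every `φ_j` is `a_j cos(2π[j/2]x - θ_j)` with `θ_j ∈ {0, π/2}`, so by the product-to-sum formula
each empirical inner product is a combination of sums `∑_l cos(2πkl/n - θ)` with
`k = [i/2] ± [j/2]`. Such a sum is the real part of `e^{-iθ}` times a geometric sum of `n`-th
roots of unity, hence equals `n cos θ` if `n ∣ k` and `0` otherwise. For odd `n` and `i, j ≤ n`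
both frequencies lie in `[0, n/2)`, so only `k = [i/2] - [j/2] = 0` can survive, and the
`k = [i/2] + [j/2]` term survives only for `i = j = 1`.
-/

open Finset

open Real

open Complex in
theorem sum_exp_two_pi_I_mul_div (n : ℕ) (k : ℤ) :
    ∑ l ∈ Icc 1 n, exp (2 * π * I * k * l / n) = if (n : ℤ) ∣ k then (n : ℂ) else 0 := by
  rcases Nat.eq_zero_or_pos n with rfl | hn
  · simp
  have hζ := isPrimitiveRoot_exp n hn.ne'
  have hpow (l : ℕ) : exp (2 * π * I * k * l / n) = (exp (2 * π * I / n) ^ k) ^ l := by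
    rw [← exp_int_mul, ← Complex.exp_nat_mul]
    ring_nf
  simp_rw [hpow]
  generalize exp (2 * π * I / n) = ζ at hζ
  have hz : ζ ^ k = 1 ↔ (n : ℤ) ∣ k := hζ.zpow_eq_one_iff_dvd k
  split_ifs with hk
  · simp [hz.mpr hk]
  · have hzn : (ζ ^ k) ^ n = 1 := by
      rw [← zpow_natCast, ← zpow_mul, mul_comm, zpow_mul, zpow_natCast, hζ.pow_eq_one, one_zpow]
    rw [← Ico_add_one_right_eq_Icc, geom_sum_Ico (mt hz.mp hk) (by omega), pow_succ, hzn]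
    simp

theorem sum_cos_two_pi_mul_div (n : ℕ) (k : ℤ) :
    ∑ l ∈ Icc 1 n, cos (2 * π * k * l / n) = if (n : ℤ) ∣ k then (n : ℝ) else 0 := by
  have h := congrArg Complex.re (sum_exp_two_pi_I_mul_div n k)
  rw [Complex.re_sum, apply_ite Complex.re, Complex.natCast_re, Complex.zero_re] at h
  refine Eq.trans (sum_congr rfl fun l _ => ?_) h
  rw [← Complex.exp_ofReal_mul_I_re]
  push_cast
  ring_nf

theorem sum_sin_two_pi_mul_div (n : ℕ) (k : ℤ) :
    ∑ l ∈ Icc 1 n, sin (2 * π * k * l / n) = 0 := by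
  have h := congrArg Complex.im (sum_exp_two_pi_I_mul_div n k)
  rw [Complex.im_sum, apply_ite Complex.im, Complex.natCast_im, Complex.zero_im, ite_self] at h
  refine Eq.trans (sum_congr rfl fun l _ => ?_) h
  rw [← Complex.exp_ofReal_mul_I_im]
  push_cast
  ring_nf

theorem sum_cos_two_pi_mul_div_sub (n : ℕ) (k : ℤ) (θ : ℝ) :
    ∑ l ∈ Icc 1 n, cos (2 * π * k * l / n - θ) = if (n : ℤ) ∣ k then n * cos θ else 0 := by
  simp_rw [cos_sub, sum_add_distrib, ← sum_mul, sum_cos_two_pi_mul_div, sum_sin_two_pi_mul_div]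
  split_ifs <;> simp

noncomputable def phiBAmp (j : ℕ) : ℝ := if j = 1 then 1 else √2

noncomputable def phiBPhase (j : ℕ) : ℝ := if j = 1 ∨ j % 2 = 0 then 0 else π / 2

theorem phiB_eq_amp_mul_cos (j : ℕ) (x : ℝ) :
    phiB j x = phiBAmp j * cos (2 * π * (j / 2 : ℕ) * x - phiBPhase j) := by
  by_cases h1 : j = 1
  · simp [phiB, phiBAmp, phiBPhase, h1]
  · by_cases h2 : j % 2 = 0 <;> simp [phiB, phiBAmp, phiBPhase, h1, h2, cos_sub_pi_div_two]

theorem sum_phiB_mul_phiB (n i j : ℕ) :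
    ∑ l ∈ Icc 1 n, phiB i (l / n) * phiB j (l / n) =
      phiBAmp i * phiBAmp j / 2 *
        ((if (n : ℤ) ∣ ((i / 2 : ℕ) - (j / 2 : ℕ) : ℤ) then n * cos (phiBPhase i - phiBPhase j)
          else 0) +
        (if (n : ℤ) ∣ ((i / 2 : ℕ) + (j / 2 : ℕ) : ℤ) then n * cos (phiBPhase i + phiBPhase j)
          else 0)) := by
  rw [← sum_cos_two_pi_mul_div_sub, ← sum_cos_two_pi_mul_div_sub, ← sum_add_distrib, mul_sum]
  refine sum_congr rfl fun l _ => ?_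
  rw [phiB_eq_amp_mul_cos, phiB_eq_amp_mul_cos]
  generalize i / 2 = a, j / 2 = b, phiBPhase i = θ, phiBPhase j = ψ
  have hsub : 2 * π * ((a - b : ℤ) : ℝ) * l / n - (θ - ψ)
      = (2 * π * a * (l / n) - θ) - (2 * π * b * (l / n) - ψ) := by push_cast; ring
  have hadd : 2 * π * ((a + b : ℤ) : ℝ) * l / n - (θ + ψ)
      = (2 * π * a * (l / n) - θ) + (2 * π * b * (l / n) - ψ) := by push_cast; ring
  rw [hsub, hadd, ← two_mul_cos_mul_cos]
  ring

theorem cos_phiBPhase_sub {i j : ℕ} (hi : i ≠ 1) (hj : j ≠ 1) (h : i / 2 = j / 2) :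
    cos (phiBPhase i - phiBPhase j) = if i = j then 1 else 0 := by
  split_ifs with hij
  · simp [hij]
  · rcases Nat.mod_two_eq_zero_or_one i with hi2 | hi2
    · have hj2 : j % 2 = 1 := by omega
      simp [phiBPhase, hi, hj, hi2, hj2]
    · have hj2 : j % 2 = 0 := by omega
      simp [phiBPhase, hi, hj, hi2, hj2]

theorem sum_phiB_mul_phiB_of_lt {n i j : ℕ} (hi : 1 ≤ i) (hj : 1 ≤ j)
    (hin : 2 * (i / 2) < n) (hjn : 2 * (j / 2) < n) :
    ∑ l ∈ Icc 1 n, phiB i (l / n) * phiB j (l / n) = if i = j then (n : ℝ) else 0 := by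
  have hsub : (n : ℤ) ∣ ((i / 2 : ℕ) - (j / 2 : ℕ) : ℤ) ↔ i / 2 = j / 2 := by
    refine ⟨fun h => ?_, fun h => by simp [h]⟩
    have := Int.eq_zero_of_abs_lt_dvd h (abs_lt.mpr ⟨by omega, by omega⟩)
    omega
  have hadd : (n : ℤ) ∣ ((i / 2 : ℕ) + (j / 2 : ℕ) : ℤ) ↔ i = 1 ∧ j = 1 := by
    refine ⟨fun h => ?_, fun ⟨hi1, hj1⟩ => by simp [hi1, hj1]⟩
    have := Int.eq_zero_of_abs_lt_dvd h (abs_lt.mpr ⟨by omega, by omega⟩)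
    omega
  rw [sum_phiB_mul_phiB, if_congr hsub rfl rfl, if_congr hadd rfl rfl]
  by_cases h11 : i = 1 ∧ j = 1
  · obtain ⟨rfl, rfl⟩ := h11
    norm_num [phiBAmp, phiBPhase]
    ring
  rw [if_neg h11, add_zero]
  by_cases hij : i / 2 = j / 2
  · have hi1 : i ≠ 1 := fun h => h11 ⟨h, by omega⟩
    have hj1 : j ≠ 1 := fun h => h11 ⟨by omega, h⟩
    rw [if_pos hij, cos_phiBPhase_sub hi1 hj1 hij]
    simp only [phiBAmp, if_neg hi1, if_neg hj1, Real.mul_self_sqrt zero_le_two]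
    split_ifs <;> simp
  · rw [if_neg hij, if_neg (fun h : i = j => hij (h ▸ rfl)), mul_zero]

/-- If `n` is odd, the first `n` trigonometric basis functions are orthonormal with
respect to the empirical inner product based on the design points `l/n`, `l = 1,…,n`. -/
theorem stmt13 (n : ℕ) (hodd : Odd n) (i j : ℕ)
    (hi1 : 1 ≤ i) (hin : i ≤ n) (hj1 : 1 ≤ j) (hjn : j ≤ n) :
    (1 / (n : ℝ)) * ∑ l ∈ Finset.Icc 1 n, phiB i ((l : ℝ) / n) * phiB j ((l : ℝ) / n)
      = if i = j then 1 else 0 := by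
  obtain ⟨m, rfl⟩ := hodd
  rw [sum_phiB_mul_phiB_of_lt hi1 hj1 (by omega) (by omega)]
  split_ifs
  · field_simp
  · rw [mul_zero]
end

section
/- Fix integers k ≥ 1 and N ≥ 1 and a real R with R > N^k Σ_{i=1}^N i^k − Σ_{i=1}^N i^{2k}. Set a*(R) = (R + Σ_{i=1}^N i^{2k}) / Σ_{i=1}^N i^k and y*_j = a*(R) j^{−k} − 1 for 1 ≤ j ≤ N. Then y*_j > 0 for every j, Σ_{j=1}^N y*_j j^{2k} = R, and for every y = (y_1,…,y_N) with y_j ≥ 0 and Σ_{j=1}^N y_j j^{2k} ≤ R, one has Σ_{j=1}^N y_j/(y_j + 1) ≤ Σ_{j=1}^N y*_j/(y*_j + 1) = N − (Σ_{j=1}^N j^k)²/(R + Σ_{j=1}^N j^{2k}). -/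
/-!
`y ↦ y/(y+1)` is concave, so each summand lies below its tangent line at `y*_j`, whose slope
`1/(y*_j+1)² = j^{2k}/a*(R)²` is proportional to the weight `j^{2k}` of the constraint. Summing the
tangent bounds, `Ψ_N(y) ≤ Ψ_N(y*) + (∑ y_j j^{2k} − R)/a*(R)² ≤ Ψ_N(y*)`.
-/

open Finset

/-- Lagrange multiplier `a*(R) = (R + ∑ i^{2k}) / ∑ i^k`. -/
noncomputable def aStar (k N : ℕ) (R : ℝ) : ℝ :=
  (R + ∑ i ∈ Finset.Icc 1 N, (i : ℝ) ^ (2 * k)) / ∑ i ∈ Finset.Icc 1 N, (i : ℝ) ^ k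

/-- Optimal point `y*_j = a*(R) j^{−k} − 1`. -/
noncomputable def yStar (k N : ℕ) (R : ℝ) (j : ℕ) : ℝ :=
  aStar k N R / (j : ℝ) ^ k - 1

theorem div_add_one_le_tangent {y t : ℝ} (hy : 0 < y + 1) (ht : 0 < t + 1) :
    y / (y + 1) ≤ t / (t + 1) + (y - t) / (t + 1) ^ 2 := by
  rw [div_add_div _ _ ht.ne' (by positivity), div_le_div_iff₀ hy (by positivity)]
  nlinarith [mul_nonneg (sq_nonneg (y - t)) ht.le]

theorem sum_div_add_one_le_of_tangent {ι : Type*} (s : Finset ι) {y t w : ι → ℝ} {c : ℝ}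
    (hc : 0 ≤ c) (hy : ∀ j ∈ s, 0 ≤ y j) (ht : ∀ j ∈ s, 0 ≤ t j)
    (hslope : ∀ j ∈ s, ((t j + 1) ^ 2)⁻¹ = c * w j)
    (hbudget : ∑ j ∈ s, y j * w j ≤ ∑ j ∈ s, t j * w j) :
    ∑ j ∈ s, y j / (y j + 1) ≤ ∑ j ∈ s, t j / (t j + 1) := by
  have htangent : ∀ j ∈ s,
      y j / (y j + 1) ≤ t j / (t j + 1) + c * (y j * w j - t j * w j) := by
    intro j hj
    have h := div_add_one_le_tangent (y := y j) (t := t j) (by linarith [hy j hj])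
      (by linarith [ht j hj])
    rwa [div_eq_mul_inv (y j - t j), hslope j hj, mul_comm, mul_assoc, mul_comm (w j), sub_mul] at h
  calc ∑ j ∈ s, y j / (y j + 1)
      ≤ ∑ j ∈ s, (t j / (t j + 1) + c * (y j * w j - t j * w j)) := sum_le_sum htangent
    _ = ∑ j ∈ s, t j / (t j + 1) + c * (∑ j ∈ s, y j * w j - ∑ j ∈ s, t j * w j) := by
      rw [sum_add_distrib, ← mul_sum, sum_sub_distrib]
    _ ≤ ∑ j ∈ s, t j / (t j + 1) :=
      add_le_of_nonpos_right (mul_nonpos_of_nonneg_of_nonpos hc (sub_nonpos.2 hbudget))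

section Optimum

variable {k N : ℕ} {R : ℝ}

theorem sum_Icc_pow_pos (k : ℕ) (hN : 1 ≤ N) : 0 < ∑ i ∈ Icc 1 N, (i : ℝ) ^ k :=
  sum_pos (fun i hi => pow_pos (by exact_mod_cast (mem_Icc.1 hi).1) k)
    ⟨1, mem_Icc.2 ⟨le_rfl, hN⟩⟩

theorem aStar_mul_sum (hN : 1 ≤ N) :
    aStar k N R * ∑ i ∈ Icc 1 N, (i : ℝ) ^ k = R + ∑ i ∈ Icc 1 N, (i : ℝ) ^ (2 * k) :=
  div_mul_cancel₀ _ (sum_Icc_pow_pos k hN).ne'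

theorem pow_lt_aStar (hN : 1 ≤ N)
    (hR : (N : ℝ) ^ k * (∑ i ∈ Icc 1 N, (i : ℝ) ^ k) - ∑ i ∈ Icc 1 N, (i : ℝ) ^ (2 * k) < R)
    {j : ℕ} (hj : j ∈ Icc 1 N) : (j : ℝ) ^ k < aStar k N R := by
  have hN_lt : (N : ℝ) ^ k < aStar k N R := by
    rw [aStar, lt_div_iff₀ (sum_Icc_pow_pos k hN)]
    linarith
  exact lt_of_le_of_lt (pow_le_pow_left₀ (Nat.cast_nonneg j)
    (by exact_mod_cast (mem_Icc.1 hj).2) k) hN_lt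

theorem yStar_add_one (j : ℕ) : yStar k N R j + 1 = aStar k N R / (j : ℝ) ^ k := by
  rw [yStar, sub_add_cancel]

theorem yStar_pos (hN : 1 ≤ N)
    (hR : (N : ℝ) ^ k * (∑ i ∈ Icc 1 N, (i : ℝ) ^ k) - ∑ i ∈ Icc 1 N, (i : ℝ) ^ (2 * k) < R)
    {j : ℕ} (hj : j ∈ Icc 1 N) : 0 < yStar k N R j := by
  have hjk : (0 : ℝ) < (j : ℝ) ^ k := pow_pos (by exact_mod_cast (mem_Icc.1 hj).1) k
  rw [yStar, sub_pos, one_lt_div hjk]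
  exact pow_lt_aStar hN hR hj

theorem yStar_mul_pow_two_mul {j : ℕ} (hj : j ≠ 0) :
    yStar k N R j * (j : ℝ) ^ (2 * k) = aStar k N R * (j : ℝ) ^ k - (j : ℝ) ^ (2 * k) := by
  have hjk : (j : ℝ) ^ k ≠ 0 := pow_ne_zero k (Nat.cast_ne_zero.2 hj)
  rw [yStar, two_mul, pow_add]
  field_simp

theorem sum_yStar_mul_pow_two_mul (hN : 1 ≤ N) :
    ∑ j ∈ Icc 1 N, yStar k N R j * (j : ℝ) ^ (2 * k) = R := by
  rw [sum_congr rfl fun j hj => yStar_mul_pow_two_mul (by have := (mem_Icc.1 hj).1; omega),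
    sum_sub_distrib, ← mul_sum, aStar_mul_sum hN, add_sub_cancel_right]

theorem yStar_div_yStar_add_one (ha : aStar k N R ≠ 0) {j : ℕ} (hj : j ≠ 0) :
    yStar k N R j / (yStar k N R j + 1) = 1 - (j : ℝ) ^ k / aStar k N R := by
  have hjk : (j : ℝ) ^ k ≠ 0 := pow_ne_zero k (Nat.cast_ne_zero.2 hj)
  rw [yStar_add_one, yStar]
  field_simp

theorem sum_yStar_div_yStar_add_one (hN : 1 ≤ N)
    (hR : (N : ℝ) ^ k * (∑ i ∈ Icc 1 N, (i : ℝ) ^ k) - ∑ i ∈ Icc 1 N, (i : ℝ) ^ (2 * k) < R) :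
    ∑ j ∈ Icc 1 N, yStar k N R j / (yStar k N R j + 1)
      = N - (∑ j ∈ Icc 1 N, (j : ℝ) ^ k) ^ 2 / (R + ∑ j ∈ Icc 1 N, (j : ℝ) ^ (2 * k)) := by
  have ha : aStar k N R ≠ 0 :=
    ((pow_pos (by exact_mod_cast hN) k).trans (pow_lt_aStar hN hR (right_mem_Icc.2 hN))).ne'
  have hs := (sum_Icc_pow_pos k hN).ne'
  rw [sum_congr rfl fun j hj => yStar_div_yStar_add_one ha (by have := (mem_Icc.1 hj).1; omega),
    sum_sub_distrib, sum_const, Nat.card_Icc, nsmul_one, ← sum_div, ← aStar_mul_sum hN]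
  push_cast
  field_simp

theorem inv_yStar_add_one_sq (j : ℕ) :
    ((yStar k N R j + 1) ^ 2)⁻¹ = (aStar k N R ^ 2)⁻¹ * (j : ℝ) ^ (2 * k) := by
  rw [yStar_add_one, div_pow, inv_div, mul_comm 2 k, pow_mul, div_eq_mul_inv, mul_comm]

end Optimum

theorem stmt15_general (k N : ℕ) (hN : 1 ≤ N) (R : ℝ)
    (hR : (N : ℝ) ^ k * (∑ i ∈ Finset.Icc 1 N, (i : ℝ) ^ k)
            - ∑ i ∈ Finset.Icc 1 N, (i : ℝ) ^ (2 * k) < R) :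
    (∀ j ∈ Finset.Icc 1 N, 0 < yStar k N R j) ∧
    (∑ j ∈ Finset.Icc 1 N, yStar k N R j * (j : ℝ) ^ (2 * k) = R) ∧
    (∀ y : ℕ → ℝ, (∀ j ∈ Finset.Icc 1 N, 0 ≤ y j) →
      (∑ j ∈ Finset.Icc 1 N, y j * (j : ℝ) ^ (2 * k)) ≤ R →
      (∑ j ∈ Finset.Icc 1 N, y j / (y j + 1))
        ≤ ∑ j ∈ Finset.Icc 1 N, yStar k N R j / (yStar k N R j + 1)) ∧
    (∑ j ∈ Finset.Icc 1 N, yStar k N R j / (yStar k N R j + 1)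
      = N - (∑ j ∈ Finset.Icc 1 N, (j : ℝ) ^ k) ^ 2
            / (R + ∑ j ∈ Finset.Icc 1 N, (j : ℝ) ^ (2 * k))) := by
  refine ⟨fun j hj => yStar_pos hN hR hj, sum_yStar_mul_pow_two_mul hN,
    fun y hy hyR => ?_, sum_yStar_div_yStar_add_one hN hR⟩
  exact sum_div_add_one_le_of_tangent _ (inv_nonneg.2 (sq_nonneg _)) hy
    (fun j hj => (yStar_pos hN hR hj).le) (fun j _ => inv_yStar_add_one_sq j)
    (hyR.trans (sum_yStar_mul_pow_two_mul hN).ge)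

/-- The solution of the constrained maximization of `Ψ_N(y) = ∑ y_j/(y_j+1)` subject to
`∑ y_j j^{2k} ≤ R`, `y_j ≥ 0`, is `y*`, with optimal value
`N − (∑ j^k)²/(R + ∑ j^{2k})`. -/
theorem stmt15 (k N : ℕ) (hk : 1 ≤ k) (hN : 1 ≤ N) (R : ℝ)
    (hR : (N : ℝ) ^ k * (∑ i ∈ Finset.Icc 1 N, (i : ℝ) ^ k)
            - ∑ i ∈ Finset.Icc 1 N, (i : ℝ) ^ (2 * k) < R) :
    (∀ j ∈ Finset.Icc 1 N, 0 < yStar k N R j) ∧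
    (∑ j ∈ Finset.Icc 1 N, yStar k N R j * (j : ℝ) ^ (2 * k) = R) ∧
    (∀ y : ℕ → ℝ, (∀ j ∈ Finset.Icc 1 N, 0 ≤ y j) →
      (∑ j ∈ Finset.Icc 1 N, y j * (j : ℝ) ^ (2 * k)) ≤ R →
      (∑ j ∈ Finset.Icc 1 N, y j / (y j + 1))
        ≤ ∑ j ∈ Finset.Icc 1 N, yStar k N R j / (yStar k N R j + 1)) ∧
    (∑ j ∈ Finset.Icc 1 N, yStar k N R j / (yStar k N R j + 1)
      = N - (∑ j ∈ Finset.Icc 1 N, (j : ℝ) ^ k) ^ 2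
            / (R + ∑ j ∈ Finset.Icc 1 N, (j : ℝ) ^ (2 * k))) :=
  stmt15_general k N hN R hR
end

section
/- For any fixed integer k ≥ 1, the normalized maximal value Ψ*_N(R) = N − (Σ_{j=1}^N j^k)²/(R + Σ_{j=1}^N j^{2k}) satisfies k²/(k+1)² ≤ liminf_{N→∞} inf_{R>0} Ψ*_N(R)/N and limsup_{N→∞} sup_{R>0} Ψ*_N(R)/N ≤ 1. -/
/-!
By Cauchy–Schwarz, `(∑ j^k)² ≤ N ∑ j^{2k}`, so `0 ≤ Ψ*_N(R) ≤ N` for every `R ≥ 0`. Comparing the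
power sums with `∫ x^m` gives `∑_{j ≤ N} j^k ≤ (N+1)^{k+1}/(k+1)` and
`∑_{j ≤ N} j^{2k} ≥ N^{2k+1}/(2k+1)`, hence, uniformly in `R`,
`Ψ*_N(R)/N ≥ 1 - (2k+1)/(k+1)² · (1 + 1/N)^{2k+2}`, which tends to
`1 - (2k+1)/(k+1)² = k²/(k+1)²`.
-/

open Finset Filter

/-- Maximal value `Ψ*_N(R) = N − (∑_{j=1}^N j^k)²/(R + ∑_{j=1}^N j^{2k})` of the
constrained maximization of `∑ y_j/(y_j+1)` subject to `∑ y_j j^{2k} ≤ R`, `y_j ≥ 0`. -/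
noncomputable def PsiStar (k N : ℕ) (R : ℝ) : ℝ :=
  N - (∑ j ∈ Finset.Icc 1 N, (j : ℝ) ^ k) ^ 2
        / (R + ∑ j ∈ Finset.Icc 1 N, (j : ℝ) ^ (2 * k))

lemma monotoneOn_pow_Icc_natCast (m a b : ℕ) :
    MonotoneOn (fun x : ℝ => x ^ m) (Set.Icc (a : ℝ) b) :=
  fun _ hx _ _ hxy => pow_le_pow_left₀ ((Nat.cast_nonneg a).trans hx.1) hxy m

lemma sum_Icc_pow_le (m N : ℕ) :
    ∑ j ∈ Icc 1 N, (j : ℝ) ^ m ≤ ((N : ℝ) + 1) ^ (m + 1) / (m + 1) :=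
  calc ∑ j ∈ Icc 1 N, (j : ℝ) ^ m = ∑ j ∈ Ico 1 (N + 1), (j : ℝ) ^ m := by
        rw [Finset.Ico_add_one_right_eq_Icc]
    _ ≤ ∫ x in (1 : ℕ)..(N + 1 : ℕ), x ^ m :=
        (monotoneOn_pow_Icc_natCast m _ _).sum_le_integral_Ico (by omega)
    _ = (((N : ℝ) + 1) ^ (m + 1) - 1) / (m + 1) := by simp [integral_pow]
    _ ≤ ((N : ℝ) + 1) ^ (m + 1) / (m + 1) := by gcongr; linarith

lemma pow_div_le_sum_Icc_pow (m N : ℕ) :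
    (N : ℝ) ^ (m + 1) / (m + 1) ≤ ∑ j ∈ Icc 1 N, (j : ℝ) ^ m :=
  calc (N : ℝ) ^ (m + 1) / (m + 1) = ∫ x in (0 : ℕ)..(N : ℕ), x ^ m := by simp [integral_pow]
    _ ≤ ∑ i ∈ Ico 0 N, ((i + 1 : ℕ) : ℝ) ^ m :=
        (monotoneOn_pow_Icc_natCast m _ _).integral_le_sum_Ico (Nat.zero_le N)
    _ = ∑ j ∈ Icc 1 N, (j : ℝ) ^ m := by
        rw [Finset.sum_Ico_add' (fun j : ℕ => (j : ℝ) ^ m), ← Finset.Ico_add_one_right_eq_Icc]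

lemma sq_sum_Icc_pow_le (k N : ℕ) :
    (∑ j ∈ Icc 1 N, (j : ℝ) ^ k) ^ 2 ≤ N * ∑ j ∈ Icc 1 N, (j : ℝ) ^ (2 * k) := by
  simpa [← pow_mul, mul_comm] using
    sq_sum_le_card_mul_sum_sq (s := Icc 1 N) (f := fun j => (j : ℝ) ^ k)

lemma tendsto_one_sub_mul_one_add_inv_pow (k : ℕ) :
    Tendsto (fun N : ℕ => 1 - (2 * k + 1) / (k + 1) ^ 2 * (1 + 1 / (N : ℝ)) ^ (2 * k + 2))
      atTop (nhds ((k : ℝ) ^ 2 / (k + 1) ^ 2)) := by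
  have h : Tendsto (fun N : ℕ => 1 + 1 / (N : ℝ)) atTop (nhds 1) := by
    simpa using (tendsto_const_nhds (x := (1 : ℝ))).add tendsto_one_div_atTop_nhds_zero_nat
  convert (tendsto_const_nhds (x := (1 : ℝ))).sub
    ((h.pow (2 * k + 2)).const_mul ((2 * (k : ℝ) + 1) / (k + 1) ^ 2)) using 2
  field_simp
  ring

namespace PsiStar

variable {k N : ℕ} {R : ℝ}

lemma le_natCast (hR : 0 ≤ R) : PsiStar k N R ≤ N :=
  sub_le_self _ (by positivity)

lemma nonneg (hR : 0 ≤ R) : 0 ≤ PsiStar k N R := by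
  refine sub_nonneg.2 (div_le_of_le_mul₀ (by positivity) (Nat.cast_nonneg N) ?_)
  refine (sq_sum_Icc_pow_le k N).trans ?_
  gcongr
  linarith

lemma div_mem_Icc (hR : 0 ≤ R) : PsiStar k N R / N ∈ Set.Icc 0 1 :=
  ⟨div_nonneg (nonneg hR) (Nat.cast_nonneg N), div_le_one_of_le₀ (le_natCast hR) (Nat.cast_nonneg N)⟩

lemma one_sub_le_div (hN : N ≠ 0) (hR : 0 ≤ R) :
    1 - (2 * k + 1) / (k + 1) ^ 2 * (1 + 1 / (N : ℝ)) ^ (2 * k + 2) ≤ PsiStar k N R / N := by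
  set S := ∑ j ∈ Icc 1 N, (j : ℝ) ^ k
  set Q := ∑ j ∈ Icc 1 N, (j : ℝ) ^ (2 * k)
  have hN' : (0 : ℝ) < N := by positivity
  have hS : S ≤ ((N : ℝ) + 1) ^ (k + 1) / (k + 1) := sum_Icc_pow_le k N
  have hQ : (N : ℝ) ^ (2 * k + 1) / (2 * k + 1) ≤ Q := by
    simpa using pow_div_le_sum_Icc_pow (2 * k) N
  have hratio :
      S ^ 2 / ((R + Q) * N) ≤ (2 * k + 1) / (k + 1) ^ 2 * (1 + 1 / (N : ℝ)) ^ (2 * k + 2) :=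
    calc S ^ 2 / ((R + Q) * N)
        ≤ (((N : ℝ) + 1) ^ (k + 1) / (k + 1)) ^ 2 / ((N : ℝ) ^ (2 * k + 1) / (2 * k + 1) * N) := by
          gcongr
          linarith
      _ = (2 * k + 1) / (k + 1) ^ 2 * (1 + 1 / (N : ℝ)) ^ (2 * k + 2) := by
          rw [one_add_div hN'.ne', div_pow, div_pow, ← pow_mul, pow_succ (N : ℝ) (2 * k + 1),
            show (k + 1) * 2 = 2 * k + 2 by ring]
          field_simp
  have hPsi : PsiStar k N R / N = 1 - S ^ 2 / ((R + Q) * N) := by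
    rw [PsiStar, sub_div, div_self hN'.ne', div_div]
  linarith

end PsiStar

theorem stmt16_general (k : ℕ) :
    (k : ℝ) ^ 2 / ((k : ℝ) + 1) ^ 2
      ≤ liminf (fun N : ℕ => sInf {y | ∃ R : ℝ, 0 < R ∧ y = PsiStar k N R / N}) atTop ∧
    limsup (fun N : ℕ => sSup {y | ∃ R : ℝ, 0 < R ∧ y = PsiStar k N R / N}) atTop ≤ 1 := by
  set values : ℕ → Set ℝ := fun N => {y | ∃ R : ℝ, 0 < R ∧ y = PsiStar k N R / N}
  have hone : ∀ N, PsiStar k N 1 / N ∈ values N := fun N => ⟨1, one_pos, rfl⟩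
  have hIcc : ∀ N, values N ⊆ Set.Icc 0 1 := by
    rintro N _ ⟨R, hR, rfl⟩
    exact PsiStar.div_mem_Icc hR.le
  have hlim := tendsto_one_sub_mul_one_add_inv_pow k
  constructor
  · rw [← hlim.liminf_eq]
    refine liminf_le_liminf ?_ hlim.isBoundedUnder_ge (isCoboundedUnder_ge_of_le atTop fun N =>
      csInf_le_of_le (bddBelow_Icc.mono (hIcc N)) (hone N) (hIcc N (hone N)).2)
    filter_upwards [eventually_ne_atTop 0] with N hN
    refine le_csInf ⟨_, hone N⟩ ?_
    rintro _ ⟨R, hR, rfl⟩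
    exact PsiStar.one_sub_le_div hN hR.le
  · refine limsup_le_of_le (isCoboundedUnder_le_of_le atTop fun N =>
      le_csSup_of_le (bddAbove_Icc.mono (hIcc N)) (hone N) (hIcc N (hone N)).1) ?_
    exact Eventually.of_forall fun N => csSup_le ⟨_, hone N⟩ fun y hy => (hIcc N hy).2

/-- Asymptotic bounds `k²/(k+1)² ≤ liminf_N inf_{R>0} Ψ*_N(R)/N` and
`limsup_N sup_{R>0} Ψ*_N(R)/N ≤ 1`. -/
theorem stmt16 (k : ℕ) (hk : 1 ≤ k) :
    (k : ℝ) ^ 2 / ((k : ℝ) + 1) ^ 2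
      ≤ liminf (fun N : ℕ => sInf {y | ∃ R : ℝ, 0 < R ∧ y = PsiStar k N R / N}) atTop ∧
    limsup (fun N : ℕ => sSup {y | ∃ R : ℝ, 0 < R ∧ y = PsiStar k N R / N}) atTop ≤ 1 :=
  stmt16_general k
end

section
/- Let f be continuously differentiable on [−1,1], let n ≥ 1, h ∈ (0,1/2) with nh ≥ 1, and let x̃ ∈ (0,1) satisfy h ≤ x̃ ≤ 1 − h. Then the Riemann-sum approximation over the design points x_i = i/n satisfies | (1/(nh)) Σ_{i=1}^n f((x_i − x̃)/h) 1_{|x_i − x̃| ≤ h} − ∫_{−1}^1 f(v) dv | ≤ (3 max_{|z|≤1} |f'(z)| + 2 max_{|z|≤1} |f(z)|) / (nh). -/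
open Finset MeasureTheory
open scoped Interval

/-!
Extend `f` to `ℝ` by constants outside `[-1, 1]`: by the mean value theorem the extension is
Lipschitz with constant `max |f'|` and bounded by `max |f|`. The rescaled design points in the
window form the grid `c + i δ`, `δ = 1 / (n h)`, `m < i ≤ N`; the cells `[c + (i - 1) δ, c + i δ]`
tile `[c + m δ, c + N δ]`, and on each cell `δ F (c + i δ)` differs from the integral by at most
`K δ²`. There are at most `(2 + δ) / δ ≤ 3 / δ` cells, and the two leftover pieces between the
outermost grid points and `±1` have length at most `δ`, whence the error
`(3 max |f'| + 2 max |f|) δ`.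
-/

theorem LipschitzOnWith.comp_projIcc {E : Type*} [PseudoMetricSpace E] {f : ℝ → E} {K : NNReal}
    {a b : ℝ} (hab : a ≤ b) (hf : LipschitzOnWith K f (Set.Icc a b)) :
    LipschitzWith K (fun x => f (Set.projIcc a b hab x)) := by
  have hproj := (LipschitzWith.subtype_val _).comp (LipschitzWith.projIcc hab)
  have := lipschitzOnWith_univ.mp (hf.comp hproj.lipschitzOnWith (fun x _ => Subtype.prop _))
  rwa [mul_one, mul_one] at this

theorem exists_lipschitzWith_extension_of_hasDerivWithinAt {f f' : ℝ → ℝ} {a b : ℝ}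
    (hab : a ≤ b) (hderiv : ∀ x ∈ Set.Icc a b, HasDerivWithinAt f (f' x) (Set.Icc a b) x)
    (hcont : ContinuousOn f' (Set.Icc a b)) :
    ∃ F : ℝ → ℝ, LipschitzWith (sSup ((fun z => |f' z|) '' Set.Icc a b)).toNNReal F ∧
      (∀ x, |F x| ≤ sSup ((fun z => |f z|) '' Set.Icc a b)) ∧ Set.EqOn F f (Set.Icc a b) := by
  have hfc : ContinuousOn f (Set.Icc a b) := fun x hx => (hderiv x hx).continuousWithinAt
  have hf'le := fun z hz => le_csSup (isCompact_Icc.bddAbove_image hcont.abs) ⟨z, hz, rfl⟩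
  have hfle := fun z hz => le_csSup (isCompact_Icc.bddAbove_image hfc.abs) ⟨z, hz, rfl⟩
  have hLip : LipschitzOnWith (sSup ((fun z => |f' z|) '' Set.Icc a b)).toNNReal f (Set.Icc a b) :=
    (convex_Icc a b).lipschitzOnWith_of_nnnorm_hasDerivWithin_le hderiv fun x hx => by
      rw [← NNReal.coe_le_coe, coe_nnnorm, Real.coe_toNNReal _
        (Real.sSup_nonneg (by rintro _ ⟨z, -, rfl⟩; exact abs_nonneg _))]
      exact hf'le x hx
  exact ⟨fun x => f (Set.projIcc a b hab x), hLip.comp_projIcc hab,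
    fun x => hfle _ (Subtype.prop _), fun x hx => by simp [Set.projIcc_of_mem hab hx]⟩

section RiemannSum

variable {F : ℝ → ℝ} {K : NNReal}

theorem LipschitzWith.abs_mul_sub_integral_le (hF : LipschitzWith K F) {p δ : ℝ} (hδ : 0 ≤ δ) :
    |δ * F p - ∫ x in (p - δ)..p, F x| ≤ K * δ ^ 2 := by
  have hint := (hF.continuous.intervalIntegrable (μ := volume) (p - δ) p)
  have hdiff : δ * F p - ∫ x in (p - δ)..p, F x = ∫ x in (p - δ)..p, (F p - F x) := by
    rw [intervalIntegral.integral_sub intervalIntegrable_const hint,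
      intervalIntegral.integral_const, smul_eq_mul, sub_sub_cancel]
  have hbound : ∀ x ∈ Ι (p - δ) p, ‖F p - F x‖ ≤ K * δ := by
    intro x hx
    rw [Set.uIoc_of_le (by linarith)] at hx
    rw [Real.norm_eq_abs, ← Real.dist_eq]
    refine (hF.dist_le_mul p x).trans (mul_le_mul_of_nonneg_left ?_ K.2)
    rw [Real.dist_eq, abs_of_nonneg (by linarith [hx.2])]
    linarith [hx.1]
  calc |δ * F p - ∫ x in (p - δ)..p, F x|
      ≤ K * δ * |p - (p - δ)| := by
        rw [hdiff]; exact intervalIntegral.norm_integral_le_of_norm_le_const hbound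
    _ = K * δ ^ 2 := by rw [sub_sub_cancel, abs_of_nonneg hδ]; ring

theorem LipschitzWith.abs_riemannSum_sub_integral_le (hF : LipschitzWith K F) (c : ℝ) {δ : ℝ}
    (hδ : 0 ≤ δ) {m N : ℕ} (hmN : m ≤ N) :
    |δ * ∑ i ∈ Ioc m N, F (c + i * δ) - ∫ x in (c + m * δ)..(c + N * δ), F x|
      ≤ (N - m) * (K * δ ^ 2) := by
  induction N, hmN using Nat.le_induction with
  | base => simp
  | succ N hmN ih =>
    have hcell := hF.abs_mul_sub_integral_le (p := c + (N + 1 : ℕ) * δ) hδ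
    have hsplit := intervalIntegral.integral_add_adjacent_intervals
      (hF.continuous.intervalIntegrable (μ := volume) (c + m * δ) (c + N * δ))
      (hF.continuous.intervalIntegrable (μ := volume) (c + N * δ) (c + (N + 1 : ℕ) * δ))
    have hleft : c + (N + 1 : ℕ) * δ - δ = c + N * δ := by push_cast; ring
    rw [hleft] at hcell
    rw [sum_Ioc_succ_top hmN, mul_add, ← hsplit]
    calc _ ≤ |δ * ∑ i ∈ Ioc m N, F (c + i * δ) - ∫ x in (c + m * δ)..(c + N * δ), F x|
          + |δ * F (c + (N + 1 : ℕ) * δ) - ∫ x in (c + N * δ)..(c + (N + 1 : ℕ) * δ), F x| := by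
          rw [add_sub_add_comm]; exact abs_add_le _ _
      _ ≤ _ := by push_cast at ih hcell ⊢; linarith

theorem LipschitzWith.abs_riemannSum_sub_integral_le_of_endpoints (hF : LipschitzWith K F)
    {M a b c δ : ℝ} (hM : ∀ x, |F x| ≤ M) (hδ : 0 ≤ δ) {m N : ℕ} (hmN : m ≤ N)
    (hm : c + m * δ ∈ Set.Icc (a - δ) a) (hN : c + N * δ ∈ Set.Icc (b - δ) b) :
    |δ * ∑ i ∈ Ioc m N, F (c + i * δ) - ∫ x in a..b, F x|
      ≤ (K * (b - a + δ) + 2 * M) * δ := by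
  set L := c + m * δ
  set R := c + N * δ
  have hint : ∀ u v : ℝ, IntervalIntegrable F volume u v :=
    hF.continuous.intervalIntegrable
  have hsplit : δ * ∑ i ∈ Ioc m N, F (c + i * δ) - ∫ x in a..b, F x
      = (δ * ∑ i ∈ Ioc m N, F (c + i * δ) - ∫ x in L..R, F x)
        + (∫ x in L..a, F x) - ∫ x in R..b, F x := by
    linarith [intervalIntegral.integral_add_adjacent_intervals (hint L a) (hint a b),
      intervalIntegral.integral_add_adjacent_intervals (hint L R) (hint R b)]
  have hend : ∀ u v : ℝ, u ≤ v → v - u ≤ δ → |∫ x in u..v, F x| ≤ M * δ := by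
    intro u v huv hvu
    have := intervalIntegral.norm_integral_le_of_norm_le_const (a := u) (b := v)
      (fun x _ => (Real.norm_eq_abs (F x)).trans_le (hM x))
    rw [abs_of_nonneg (sub_nonneg.mpr huv)] at this
    exact this.trans (mul_le_mul_of_nonneg_left hvu ((abs_nonneg _).trans (hM 0)))
  have hcells : |δ * ∑ i ∈ Ioc m N, F (c + i * δ) - ∫ x in L..R, F x|
      ≤ (N - m) * (K * δ ^ 2) := hF.abs_riemannSum_sub_integral_le c hδ hmN
  have hlen : ((N : ℝ) - m) * δ ≤ b - a + δ := by
    have : ((N : ℝ) - m) * δ = R - L := by simp only [L, R]; ring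
    linarith [hm.1, hN.2]
  have hcells' : ((N : ℝ) - m) * (K * δ ^ 2) ≤ K * (b - a + δ) * δ := by
    calc ((N : ℝ) - m) * (K * δ ^ 2) = K * (((N : ℝ) - m) * δ) * δ := by ring
      _ ≤ K * (b - a + δ) * δ := by gcongr
  rw [hsplit]
  have hL := hend L a hm.2 (by linarith [hm.1])
  have hR := hend R b hN.2 (by linarith [hN.1])
  set E := δ * ∑ i ∈ Ioc m N, F (c + i * δ) - ∫ x in L..R, F x
  calc |E + (∫ x in L..a, F x) - ∫ x in R..b, F x|
      ≤ |E| + |∫ x in L..a, F x| + |∫ x in R..b, F x| :=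
        (abs_sub _ _).trans (by gcongr; exact abs_add_le _ _)
    _ ≤ (K * (b - a + δ) + 2 * M) * δ := by linarith

end RiemannSum

theorem add_mul_mem_Icc_of_mem_Icc_sub_one {c δ t x : ℝ} (hδ : 0 ≤ δ)
    (hx : x ∈ Set.Icc (t - 1) t) : c + x * δ ∈ Set.Icc (c + t * δ - δ) (c + t * δ) :=
  ⟨by nlinarith [hx.1], by nlinarith [hx.2]⟩

theorem Nat.cast_ceil_sub_one_mem_Icc {u : ℝ} (hu : 0 ≤ u) :
    ((⌈u⌉₊ - 1 : ℕ) : ℝ) ∈ Set.Icc (u - 1) u := by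
  rcases Nat.eq_zero_or_pos ⌈u⌉₊ with hzero | hpos
  · have : u = 0 := le_antisymm (Nat.ceil_eq_zero.mp hzero) hu
    simp [this]
  · rw [Nat.cast_sub hpos, Nat.cast_one]
    exact ⟨by linarith [Nat.le_ceil u], by linarith [Nat.ceil_lt_add_one hu]⟩

theorem Nat.filter_Icc_one_eq_Ioc_ceil_floor {n : ℕ} {u w : ℝ} (hw : w ≤ n) :
    (Icc 1 n).filter (fun i : ℕ => u ≤ i ∧ (i : ℝ) ≤ w) = Ioc (⌈u⌉₊ - 1) ⌊w⌋₊ := by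
  ext i
  simp only [mem_filter, mem_Icc, mem_Ioc]
  constructor
  · rintro ⟨⟨hi, -⟩, hui, hiw⟩
    exact ⟨by have := Nat.ceil_le.mpr hui; omega, Nat.le_floor hiw⟩
  · rintro ⟨hci, hiw⟩
    have hiw' : (i : ℝ) ≤ w := (Nat.le_floor_iff' (by omega)).mp hiw
    exact ⟨⟨by omega, by exact_mod_cast hiw'.trans hw⟩, Nat.ceil_le.mp (by omega), hiw'⟩

theorem sum_window_eq_sum_Ioc {g G : ℝ → ℝ} (hG : Set.EqOn G g (Set.Icc (-1) 1)) {n : ℕ}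
    {h xt : ℝ} (hn : 0 < (n : ℝ)) (hh : 0 < h) (hxt : xt + h ≤ 1) :
    (∑ i ∈ Icc 1 n, if |(i : ℝ) / n - xt| ≤ h then g (((i : ℝ) / n - xt) / h) else 0)
      = ∑ i ∈ Ioc (⌈n * (xt - h)⌉₊ - 1) ⌊n * (xt + h)⌋₊, G (-xt / h + i * (1 / (n * h))) := by
  have hwindow : ∀ x : ℝ, |x / n - xt| ≤ h ↔ n * (xt - h) ≤ x ∧ x ≤ n * (xt + h) := fun x => by
    rw [abs_le, le_sub_iff_add_le, sub_le_iff_le_add, le_div_iff₀ hn, div_le_iff₀ hn]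
    constructor <;> rintro ⟨h1, h2⟩ <;> constructor <;> nlinarith
  have hmem : ∀ x : ℝ, |x / n - xt| ≤ h → (x / n - xt) / h ∈ Set.Icc (-1) 1 := fun x hx => by
    rw [Set.mem_Icc, ← abs_le, abs_div, abs_of_pos hh, div_le_one hh]; exact hx
  rw [← Nat.filter_Icc_one_eq_Ioc_ceil_floor (by nlinarith), sum_filter]
  refine sum_congr rfl fun i _ => ?_
  by_cases hi : |(i : ℝ) / n - xt| ≤ h
  · rw [if_pos hi, if_pos ((hwindow i).mp hi), ← hG (hmem _ hi)]
    congr 1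
    field_simp
    ring
  · rw [if_neg hi, if_neg (mt (hwindow i).mpr hi)]

theorem stmt18_general (f f' : ℝ → ℝ)
    (hderiv : ∀ x ∈ Set.Icc (-1:ℝ) 1, HasDerivWithinAt f (f' x) (Set.Icc (-1:ℝ) 1) x)
    (hcont : ContinuousOn f' (Set.Icc (-1:ℝ) 1))
    (n : ℕ) (h : ℝ) (hh : h ∈ Set.Ioo (0:ℝ) (1/2))
    (hnh : 1 ≤ (n : ℝ) * h) (xt : ℝ) (hxt1 : h ≤ xt) (hxt2 : xt ≤ 1 - h) :
    |(1 / ((n : ℝ) * h)) *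
        (∑ i ∈ Finset.Icc 1 n,
          if |(i : ℝ) / n - xt| ≤ h then f (((i : ℝ) / n - xt) / h) else 0)
      - ∫ v in (-1:ℝ)..1, f v|
    ≤ (3 * sSup ((fun z => |f' z|) '' Set.Icc (-1:ℝ) 1)
        + 2 * sSup ((fun z => |f z|) '' Set.Icc (-1:ℝ) 1)) / ((n : ℝ) * h) := by
  obtain ⟨hh0, -⟩ := hh
  have hn0 : (0 : ℝ) < n := Nat.cast_pos.mpr (Nat.pos_of_ne_zero (by rintro rfl; norm_num at hnh))
  obtain ⟨F, hF, hFM, hFf⟩ :=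
    exists_lipschitzWith_extension_of_hasDerivWithinAt (by norm_num) hderiv hcont
  have hFf' : Set.EqOn f F (Set.uIcc (-1) 1) := by
    rw [Set.uIcc_of_le (by norm_num)]; exact hFf.symm
  rw [sum_window_eq_sum_Ioc hFf hn0 hh0 (by linarith), intervalIntegral.integral_congr hFf']
  set δ := 1 / ((n : ℝ) * h)
  set u := (n : ℝ) * (xt - h)
  set w := (n : ℝ) * (xt + h)
  have hδ : 0 ≤ δ := by positivity
  have hu : -xt / h + u * δ = -1 := by simp only [u, δ]; field_simp; ring
  have hw : -xt / h + w * δ = 1 := by simp only [w, δ]; field_simp; ring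
  have hm := Nat.cast_ceil_sub_one_mem_Icc (show 0 ≤ u from mul_nonneg hn0.le (by linarith))
  have hN : (⌊w⌋₊ : ℝ) ∈ Set.Icc (w - 1) w :=
    ⟨(Nat.sub_one_lt_floor w).le, Nat.floor_le (mul_nonneg hn0.le (by linarith))⟩
  have hmN : ⌈u⌉₊ - 1 ≤ ⌊w⌋₊ := by
    have : u + 1 ≤ w - 1 := by simp only [u, w]; linarith
    exact_mod_cast (by linarith [hm.2, hN.1] : ((⌈u⌉₊ - 1 : ℕ) : ℝ) ≤ ⌊w⌋₊)
  have key := hF.abs_riemannSum_sub_integral_le_of_endpoints hFM hδ hmN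
    (hu ▸ add_mul_mem_Icc_of_mem_Icc_sub_one hδ hm) (hw ▸ add_mul_mem_Icc_of_mem_Icc_sub_one hδ hN)
  refine key.trans ((mul_le_mul_of_nonneg_right ?_ hδ).trans_eq (div_eq_mul_one_div _ _).symm)
  have hδ1 : δ ≤ 1 := by rw [div_le_one (by positivity)]; exact hnh
  have hM'0 : 0 ≤ sSup ((fun z => |f' z|) '' Set.Icc (-1 : ℝ) 1) :=
    Real.sSup_nonneg (by rintro _ ⟨z, -, rfl⟩; exact abs_nonneg _)
  rw [Real.coe_toNNReal _ hM'0]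
  nlinarith

/-- Riemann-sum approximation over design points `x_i = i/n` in the window
`[x̃ − h, x̃ + h]`, rescaled to `[−1,1]`, for a continuously differentiable `f`. -/
theorem stmt18 (f f' : ℝ → ℝ)
    (hderiv : ∀ x ∈ Set.Icc (-1:ℝ) 1, HasDerivWithinAt f (f' x) (Set.Icc (-1:ℝ) 1) x)
    (hcont : ContinuousOn f' (Set.Icc (-1:ℝ) 1))
    (n : ℕ) (hn : 1 ≤ n) (h : ℝ) (hh : h ∈ Set.Ioo (0:ℝ) (1/2))
    (hnh : 1 ≤ (n : ℝ) * h) (xt : ℝ) (hxt1 : h ≤ xt) (hxt2 : xt ≤ 1 - h) :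
    |(1 / ((n : ℝ) * h)) *
        (∑ i ∈ Finset.Icc 1 n,
          if |(i : ℝ) / n - xt| ≤ h then f (((i : ℝ) / n - xt) / h) else 0)
      - ∫ v in (-1:ℝ)..1, f v|
    ≤ (3 * sSup ((fun z => |f' z|) '' Set.Icc (-1:ℝ) 1)
        + 2 * sSup ((fun z => |f z|) '' Set.Icc (-1:ℝ) 1)) / ((n : ℝ) * h) :=
  stmt18_general f f' hderiv hcont n h hh hnh xt hxt1 hxt2
end
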